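/- Let d ≥ 1, r > 0, ε > 0, let m > 0 be an integer, and let β₂ > m/2 and c₂ > 0. Then there exists K > 0 such that for every k ∈ ℝ^d with |k| ≥ K, ‖v_{k,m,ε}‖_{L²(ℝ^d)} > c₂ (ln(3 + ‖ℱv_{k,m,ε}‖_{L^∞(B_r)}^{−1}))^{−β₂}. -/

import Mathlib

open MeasureTheory Real

noncomputable section

/-- Euclidean space ℝ^d. -/
abbrev Ed (d : ℕ) := EuclideanSpace ℝ (Fin d)

/-- The Fourier transform  ℱv(ξ) = (2π)^{-d} ∫ e^{i ξ·x} v(x) dx. -/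
def FT {d : ℕ} (v : Ed d → ℂ) (ξ : Ed d) : ℂ :=
  ((((2 * π) ^ d)⁻¹ : ℝ) : ℂ) * ∫ x : Ed d, Complex.exp (Complex.I * ((inner ℝ ξ x : ℝ) : ℂ)) * v x

/-- The inverse Fourier transform  ℱ⁻¹u(x) = ∫ u(ξ) e^{-i ξ·x} dξ. -/
def IFT {d : ℕ} (u : Ed d → ℂ) (x : Ed d) : ℂ :=
  ∫ ξ : Ed d, u ξ * Complex.exp (-(Complex.I * ((inner ℝ ξ x : ℝ) : ℂ)))

/-- Q_v(λ) = (2π)^{-d} ∫ e^{λ|x|} |v(x)| dx. -/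
def Qv {d : ℕ} (v : Ed d → ℂ) (lam : ℝ) : ℝ :=
  ((2 * π) ^ d)⁻¹ * ∫ x : Ed d, Real.exp (lam * ‖x‖) * ‖v x‖

/-- The open ball B_r ⊆ ℝ^d. -/
def ball (d : ℕ) (r : ℝ) : Set (Ed d) := {ξ : Ed d | ‖ξ‖ < r}

/-- The sup (L^∞) norm of f on the set S. -/
def supNormOn {d : ℕ} (S : Set (Ed d)) (f : Ed d → ℂ) : ℝ := ⨆ ξ ∈ S, ‖f ξ‖

/-- Membership in L^∞(B_r): measurable and bounded on B_r. -/
def MemLinf {d : ℕ} (r : ℝ) (w : Ed d → ℂ) : Prop :=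
  Measurable w ∧ ∃ M : ℝ, ∀ ξ ∈ ball d r, ‖w ξ‖ ≤ M

/-- Chebyshev polynomial of the first kind, evaluated at a real point. -/
def cheb (k : ℕ) (t : ℝ) : ℝ := (Polynomial.Chebyshev.T ℝ k).eval t

/-- Chebyshev coefficients a_k[w](θ) of the data w on B_r in direction θ. -/
def chebCoef {d : ℕ} (r : ℝ) (w : Ed d → ℂ) (k : ℕ) (θ : Ed d) : ℂ :=
  if k = 0 then
    ((π⁻¹ : ℝ) : ℂ) * ∫ t in (-r)..r, w (t • θ) / ((Real.sqrt (r ^ 2 - t ^ 2) : ℝ) : ℂ)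
  else
    (((2 / π : ℝ)) : ℂ) *
      ∫ t in (-r)..r, w (t • θ) * ((cheb k (t / r) : ℝ) : ℂ) / ((Real.sqrt (r ^ 2 - t ^ 2) : ℝ) : ℂ)

/-- The Chebyshev-based extrapolation C_{R,n} w. -/
def ChebExt {d : ℕ} (r R : ℝ) (n : ℕ) (w : Ed d → ℂ) (ξ : Ed d) : ℂ :=
  if ‖ξ‖ < r then w ξ
  else if ‖ξ‖ < R then
    ∑ k ∈ Finset.range n, chebCoef r w k (‖ξ‖⁻¹ • ξ) * ((cheb k (‖ξ‖ / r) : ℝ) : ℂ)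
  else 0

/-- L_τ(δ) = max {1, ½((1-τ) ln(N/δ)/(σ r^ν))^τ }. -/
def Lt (N δ r σ ν τ : ℝ) : ℝ :=
  max 1 (((1 - τ) * Real.log (N / δ) / (σ * r ^ ν)) ^ τ / 2)

/-- R_τ(δ) = r L_τ(δ). -/
def Rt (N δ r σ ν τ : ℝ) : ℝ := r * Lt N δ r σ ν τ

/-- n_τ(δ). -/
def nt (N δ r σ ν τ : ℝ) : ℕ :=
  if 0 < τ then
    ⌈(2 - τ) * Real.log (N / δ) / (Real.log 2 + (τ * ν)⁻¹ * Real.log (2 * Lt N δ r σ ν τ))⌉₊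
  else 0

/-- The extrapolation C*_{τ,δ} = C_{R_τ(δ), n_τ(δ)}. -/
def Cstar {d : ℕ} (N δ r σ ν τ : ℝ) (w : Ed d → ℂ) : Ed d → ℂ :=
  ChebExt r (Rt N δ r σ ν τ) (nt N δ r σ ν τ) w

/-- c(d) = d π^{d/2} / Γ(d/2 + 1), the surface measure of the unit sphere. -/
def cd (d : ℕ) : ℝ := d * π ^ ((d : ℝ) / 2) / Real.Gamma ((d : ℝ) / 2 + 1)

/-- The W^m norm: ‖(1+|ξ|²)^{m/2} ℱu‖_{L^∞}. -/
def Wnorm {d : ℕ} (m : ℝ) (v : Ed d → ℂ) : ℝ :=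
  ⨆ ξ : Ed d, (1 + ‖ξ‖ ^ 2) ^ (m / 2) * ‖FT v ξ‖

/-- The L² norm of f on ℝ^d. -/
def L2Norm {d : ℕ} (f : Ed d → ℂ) : ℝ := Real.sqrt (∫ x : Ed d, ‖f x‖ ^ 2)

/-- The Sobolev H^s norm: ‖ℱ⁻¹[(1+|ξ|²)^{s/2} ℱu]‖_{L²}. -/
def Hnorm {d : ℕ} (s : ℝ) (v : Ed d → ℂ) : ℝ :=
  L2Norm (IFT fun ξ => (((1 + ‖ξ‖ ^ 2) ^ (s / 2) : ℝ) : ℂ) * FT v ξ)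

/-- The open ellipse D(ρ) = { cos z : |Im z| < ln ρ } ⊆ ℂ. -/
def ellipse (ρ : ℝ) : Set ℂ := {w : ℂ | ∃ z : ℂ, |z.im| < Real.log ρ ∧ Complex.cos z = w}

/-- Chebyshev coefficients b_k of a function on [-1,1]. -/
def chebCoef1 (f : ℂ → ℂ) (k : ℕ) : ℂ :=
  if k = 0 then
    ((π⁻¹ : ℝ) : ℂ) * ∫ t in (-1 : ℝ)..1, f t / ((Real.sqrt (1 - t ^ 2) : ℝ) : ℂ)
  else
    (((2 / π : ℝ)) : ℂ) *
      ∫ t in (-1 : ℝ)..1, f t * ((cheb k t : ℝ) : ℂ) / ((Real.sqrt (1 - t ^ 2) : ℝ) : ℂ)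

/-- The instability example v_{k,m,ε}(x) = ε |k|^{-m} e^{-|x|²/2} cos(k·x). -/
def vkme {d : ℕ} (k : Ed d) (m : ℕ) (ε : ℝ) (x : Ed d) : ℂ :=
  ((ε * (‖k‖ ^ m)⁻¹ * Real.exp (-(‖x‖ ^ 2) / 2) * Real.cos (inner ℝ k x : ℝ) : ℝ) : ℂ)


/-!
The Fourier transform of `vkme k m ε` is an explicit sum of two Gaussians centred at `∓k`, so on
`B_r` it is positive and at most `ε |k|^{-m} (2π)^{-d/2} e^{-(|k|-r)²/2}`. Hence the logarithm on
the right-hand side grows like `|k|²`, and the right-hand side decays like `|k|^{-2β₂}`. The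
squared `L²` norm is a Gaussian integral of `cos²`, equal to
`ε² |k|^{-2m} π^{d/2} (1 + e^{-|k|²}) / 2`, so the left-hand side decays only like `|k|^{-m}`,
which wins since `m < 2β₂`.
-/

open scoped RealInnerProductSpace
open Filter GaussianFourier

section Gaussian

variable {V : Type*} [NormedAddCommGroup V] [InnerProductSpace ℝ V]

lemma re_cexp_neg_mul_sq_norm_add_I_mul_inner (b : ℝ) (w x : V) :
    (Complex.exp (-(b : ℂ) * ‖x‖ ^ 2 + Complex.I * ⟪w, x⟫)).re =
      rexp (-b * ‖x‖ ^ 2) * cos ⟪w, x⟫ := by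
  rw [Complex.exp_re]
  congr 2 <;> simp [← Complex.ofReal_pow]

lemma cexp_I_inner_mul_exp_neg_mul_sq_norm_mul_cos (b : ℝ) (ξ k x : V) :
    Complex.exp (Complex.I * ⟪ξ, x⟫) * ((rexp (-b * ‖x‖ ^ 2) * cos ⟪k, x⟫ : ℝ) : ℂ) =
      (Complex.exp (-(b : ℂ) * ‖x‖ ^ 2 + Complex.I * ⟪ξ + k, x⟫) +
        Complex.exp (-(b : ℂ) * ‖x‖ ^ 2 + Complex.I * ⟪ξ - k, x⟫)) / 2 := by
  rw [inner_add_left, inner_sub_left, Complex.ofReal_mul, Complex.ofReal_exp, Complex.ofReal_cos,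
    Complex.cos]
  push_cast
  rw [show -(b : ℂ) * ‖x‖ ^ 2 + Complex.I * (⟪ξ, x⟫ + ⟪k, x⟫) =
      Complex.I * ⟪ξ, x⟫ + (-b * ‖x‖ ^ 2 + ⟪k, x⟫ * Complex.I) by ring,
    show -(b : ℂ) * ‖x‖ ^ 2 + Complex.I * (⟪ξ, x⟫ - ⟪k, x⟫) =
      Complex.I * ⟪ξ, x⟫ + (-b * ‖x‖ ^ 2 + -⟪k, x⟫ * Complex.I) by ring]
  simp only [Complex.exp_add]
  ring

variable [FiniteDimensional ℝ V] [MeasurableSpace V] [BorelSpace V]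

lemma integrable_exp_neg_mul_sq_norm_mul_cos_inner {b : ℝ} (hb : 0 < b) (w : V) :
    Integrable fun x : V => rexp (-b * ‖x‖ ^ 2) * cos ⟪w, x⟫ := by
  simpa only [RCLike.re_to_complex, re_cexp_neg_mul_sq_norm_add_I_mul_inner] using
    (integrable_cexp_neg_mul_sq_norm_add (b := (b : ℂ)) hb Complex.I w).re

lemma integral_cexp_neg_mul_sq_norm_add_I_mul_inner {b : ℝ} (hb : 0 < b) (w : V) :
    ∫ x : V, Complex.exp (-(b : ℂ) * ‖x‖ ^ 2 + Complex.I * ⟪w, x⟫) =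
      (((π / b) ^ (Module.finrank ℝ V / 2 : ℝ) * rexp (-‖w‖ ^ 2 / (4 * b)) : ℝ) : ℂ) := by
  rw [integral_cexp_neg_mul_sq_norm_add (b := (b : ℂ)) hb, Complex.I_sq, ← Complex.ofReal_div,
    ← Complex.ofReal_natCast, ← Complex.ofReal_ofNat, ← Complex.ofReal_div,
    ← Complex.ofReal_cpow (by positivity), Complex.ofReal_mul, Complex.ofReal_exp]
  push_cast
  ring_nf

lemma integral_exp_neg_mul_sq_norm_mul_cos_inner {b : ℝ} (hb : 0 < b) (w : V) :
    ∫ x : V, rexp (-b * ‖x‖ ^ 2) * cos ⟪w, x⟫ =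
      (π / b) ^ (Module.finrank ℝ V / 2 : ℝ) * rexp (-‖w‖ ^ 2 / (4 * b)) := by
  have h := integral_re (integrable_cexp_neg_mul_sq_norm_add (b := (b : ℂ)) hb Complex.I w)
  simp only [RCLike.re_to_complex, re_cexp_neg_mul_sq_norm_add_I_mul_inner] at h
  rw [h, integral_cexp_neg_mul_sq_norm_add_I_mul_inner hb, Complex.ofReal_re]

lemma integral_cexp_I_inner_mul_exp_neg_mul_sq_norm_mul_cos {b : ℝ} (hb : 0 < b) (ξ k : V) :
    ∫ x : V, Complex.exp (Complex.I * ⟪ξ, x⟫) * ((rexp (-b * ‖x‖ ^ 2) * cos ⟪k, x⟫ : ℝ) : ℂ) =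
      (((π / b) ^ (Module.finrank ℝ V / 2 : ℝ) *
        ((rexp (-‖ξ + k‖ ^ 2 / (4 * b)) + rexp (-‖ξ - k‖ ^ 2 / (4 * b))) / 2) : ℝ) : ℂ) := by
  simp only [cexp_I_inner_mul_exp_neg_mul_sq_norm_mul_cos]
  rw [integral_div, integral_add (integrable_cexp_neg_mul_sq_norm_add (b := (b : ℂ)) hb _ _)
    (integrable_cexp_neg_mul_sq_norm_add (b := (b : ℂ)) hb _ _),
    integral_cexp_neg_mul_sq_norm_add_I_mul_inner hb,
    integral_cexp_neg_mul_sq_norm_add_I_mul_inner hb]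
  push_cast
  ring

end Gaussian

lemma vkme_apply {d : ℕ} (k : Ed d) (m : ℕ) (ε : ℝ) (x : Ed d) :
    vkme k m ε x =
      ((ε * (‖k‖ ^ m)⁻¹ : ℝ) : ℂ) * ((rexp (-(1 / 2) * ‖x‖ ^ 2) * cos ⟪k, x⟫ : ℝ) : ℂ) := by
  rw [vkme, ← Complex.ofReal_mul]
  ring_nf

lemma FT_vkme {d : ℕ} (k : Ed d) (m : ℕ) (ε : ℝ) (ξ : Ed d) :
    FT (vkme k m ε) ξ = ((ε * (‖k‖ ^ m)⁻¹ * (2 * π) ^ (-(d / 2 : ℝ)) *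
      ((rexp (-‖ξ + k‖ ^ 2 / 2) + rexp (-‖ξ - k‖ ^ 2 / 2)) / 2) : ℝ) : ℂ) := by
  have hpow : ((2 * π) ^ d)⁻¹ * (π / (1 / 2)) ^ (d / 2 : ℝ) = (2 * π) ^ (-(d / 2 : ℝ)) := by
    rw [← rpow_natCast, ← rpow_neg (by positivity), show π / (1 / 2) = 2 * π by ring,
      ← rpow_add (by positivity)]
    ring_nf
  simp only [FT, vkme_apply, mul_left_comm (Complex.exp _), integral_const_mul,
    integral_cexp_I_inner_mul_exp_neg_mul_sq_norm_mul_cos one_half_pos, finrank_euclideanSpace_fin]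
  rw [← hpow]
  push_cast
  ring_nf

lemma norm_vkme_sq {d : ℕ} (k : Ed d) (m : ℕ) (ε : ℝ) (x : Ed d) :
    ‖vkme k m ε x‖ ^ 2 = (ε * (‖k‖ ^ m)⁻¹) ^ 2 / 2 *
      (rexp (-1 * ‖x‖ ^ 2) + rexp (-1 * ‖x‖ ^ 2) * cos ⟪(2 : ℝ) • k, x⟫) := by
  have hexp : rexp (-(‖x‖ ^ 2) / 2) ^ 2 = rexp (-1 * ‖x‖ ^ 2) := by
    rw [sq, ← Real.exp_add]; ring_nf
  rw [vkme, Complex.norm_real, Real.norm_eq_abs, sq_abs, real_inner_smul_left, mul_pow, mul_pow,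
    hexp, cos_sq]
  ring

lemma integral_norm_vkme_sq {d : ℕ} (k : Ed d) (m : ℕ) (ε : ℝ) :
    ∫ x, ‖vkme k m ε x‖ ^ 2 =
      (ε * (‖k‖ ^ m)⁻¹) ^ 2 / 2 * π ^ (d / 2 : ℝ) * (1 + rexp (-‖k‖ ^ 2)) := by
  have hgauss : Integrable fun x : Ed d => rexp (-1 * ‖x‖ ^ 2) := by
    simpa using integrable_exp_neg_mul_sq_norm_mul_cos_inner one_pos (0 : Ed d)
  simp only [norm_vkme_sq, integral_const_mul]
  rw [integral_add hgauss (integrable_exp_neg_mul_sq_norm_mul_cos_inner one_pos _),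
    integral_rexp_neg_mul_sq_norm one_pos,
    integral_exp_neg_mul_sq_norm_mul_cos_inner one_pos, finrank_euclideanSpace_fin, norm_smul,
    Real.norm_two]
  ring_nf

lemma L2Norm_vkme_ge {d : ℕ} (k : Ed d) (m : ℕ) (ε : ℝ) :
    ε * (‖k‖ ^ m)⁻¹ * √(π ^ (d / 2 : ℝ) / 2) ≤ L2Norm (vkme k m ε) := by
  refine (le_abs_self _).trans (Real.abs_le_sqrt ?_)
  rw [integral_norm_vkme_sq, mul_pow, sq_sqrt (by positivity)]
  have : 0 ≤ (ε * (‖k‖ ^ m)⁻¹) ^ 2 / 2 * π ^ (d / 2 : ℝ) * rexp (-‖k‖ ^ 2) := by positivity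
  linarith

section SupNorm

variable {d : ℕ} {S : Set (Ed d)} {f : Ed d → ℂ} {M : ℝ}

lemma supNormOn_le (hM : 0 ≤ M) (h : ∀ ξ ∈ S, ‖f ξ‖ ≤ M) : supNormOn S f ≤ M :=
  Real.iSup_le (fun ξ => Real.iSup_le (h ξ) hM) hM

lemma norm_le_supNormOn (h : ∀ ξ ∈ S, ‖f ξ‖ ≤ M) {ξ : Ed d} (hξ : ξ ∈ S) :
    ‖f ξ‖ ≤ supNormOn S f := by
  have hbdd : BddAbove (Set.range fun η => ⨆ _ : η ∈ S, ‖f η‖) :=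
    ⟨max M 0, Set.forall_mem_range.2 fun η =>
      Real.iSup_le (fun hη => (h η hη).trans (le_max_left _ _)) (le_max_right _ _)⟩
  have h := le_ciSup hbdd ξ
  rw [ciSup_pos hξ] at h
  exact h

end SupNorm

lemma sq_sub_le_sq_norm_add {E : Type*} [SeminormedAddCommGroup E] {ξ k : E} {r : ℝ}
    (hξ : ‖ξ‖ ≤ r) (hr : r ≤ ‖k‖) : (‖k‖ - r) ^ 2 ≤ ‖ξ + k‖ ^ 2 := by
  have : ‖k‖ - ‖ξ‖ ≤ ‖ξ + k‖ := by
    simpa [add_comm] using norm_sub_norm_le k (-ξ)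
  exact pow_le_pow_left₀ (by linarith) (by linarith) 2

section FourierBounds

variable {d : ℕ} {r ε : ℝ} {k : Ed d} (m : ℕ)

lemma norm_FT_vkme_le (hε : 0 ≤ ε) (hr : r ≤ ‖k‖) {ξ : Ed d} (hξ : ‖ξ‖ ≤ r) :
    ‖FT (vkme k m ε) ξ‖ ≤
      ε * (‖k‖ ^ m)⁻¹ * (2 * π) ^ (-(d / 2 : ℝ)) * rexp (-(‖k‖ - r) ^ 2 / 2) := by
  have hexp : ∀ w : Ed d, (‖k‖ - r) ^ 2 ≤ ‖w‖ ^ 2 →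
      rexp (-‖w‖ ^ 2 / 2) ≤ rexp (-(‖k‖ - r) ^ 2 / 2) :=
    fun w hw => exp_le_exp.2 (by linarith)
  have hplus := hexp _ (sq_sub_le_sq_norm_add hξ hr)
  have hminus := hexp (ξ - k) (by
    simpa [sub_eq_add_neg] using sq_sub_le_sq_norm_add (k := -k) hξ (by rwa [norm_neg]))
  rw [FT_vkme, Complex.norm_real, Real.norm_of_nonneg (by positivity)]
  gcongr
  linarith

lemma supNormOn_ball_FT_vkme_le (hε : 0 ≤ ε) (hr : r ≤ ‖k‖) :
    supNormOn (ball d r) (FT (vkme k m ε)) ≤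
      ε * (‖k‖ ^ m)⁻¹ * (2 * π) ^ (-(d / 2 : ℝ)) * rexp (-(‖k‖ - r) ^ 2 / 2) :=
  supNormOn_le (by positivity) fun _ hξ => norm_FT_vkme_le m hε hr (le_of_lt hξ)

lemma supNormOn_ball_FT_vkme_pos (hr₀ : 0 < r) (hε : 0 < ε) (hr : r ≤ ‖k‖) :
    0 < supNormOn (ball d r) (FT (vkme k m ε)) := by
  have hk : 0 < ‖k‖ := hr₀.trans_le hr
  refine lt_of_lt_of_le ?_ (norm_le_supNormOn (fun _ hξ => norm_FT_vkme_le m hε.le hr (le_of_lt hξ))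
    (show (0 : Ed d) ∈ ball d r by simpa [ball] using hr₀))
  rw [FT_vkme, Complex.norm_real, norm_pos_iff]
  positivity

end FourierBounds

lemma sub_log_le_log_three_add_inv {S M t : ℝ} (hS : 0 < S) (hSM : S ≤ M * rexp (-t)) :
    t - log M ≤ log (3 + S⁻¹) := by
  have hM : 0 < M := pos_of_mul_pos_left (hS.trans_le hSM) (exp_pos _).le
  calc t - log M = -log (M * rexp (-t)) := by
        rw [log_mul hM.ne' (exp_pos _).ne', log_exp]; ring
    _ ≤ -log S := neg_le_neg (log_le_log hS hSM)
    _ = log S⁻¹ := (log_inv S).symm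
    _ ≤ log (3 + S⁻¹) := log_le_log (inv_pos.2 hS) (by linarith)

lemma eventually_sq_div_sixteen_le (r B : ℝ) :
    ∀ᶠ a in atTop, a ^ 2 / 16 ≤ (a - r) ^ 2 / 2 - B := by
  filter_upwards [eventually_ge_atTop (2 * |r|), eventually_ge_atTop (16 * |B| + 1)] with a hr hB
  have hsq : a ^ 2 / 4 ≤ (a - r) ^ 2 := by nlinarith [le_abs_self r, abs_nonneg r]
  nlinarith [le_abs_self B, abs_nonneg B]

lemma rpow_neg_sq_div_sixteen_mul_pow {a : ℝ} (ha : 0 < a) (β : ℝ) (m : ℕ) :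
    (a ^ 2 / 16) ^ (-β) * a ^ m = 16 ^ β * a ^ ((m : ℝ) - 2 * β) := by
  rw [div_rpow (by positivity) (by norm_num), rpow_neg (by norm_num : (0 : ℝ) ≤ 16),
    ← rpow_natCast a m, ← rpow_natCast a 2, ← rpow_mul ha.le, sub_eq_add_neg,
    rpow_add ha]
  push_cast
  field_simp

lemma eventually_mul_rpow_neg_sq_div_sixteen_lt {m : ℕ} {β : ℝ} (hβ : (m : ℝ) / 2 < β) (c : ℝ)
    {C : ℝ} (hC : 0 < C) :
    ∀ᶠ a in atTop, c * (a ^ 2 / 16) ^ (-β) < C * (a ^ m)⁻¹ := by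
  have hlim : Tendsto (fun a : ℝ => c * 16 ^ β * a ^ ((m : ℝ) - 2 * β)) atTop (nhds 0) := by
    simpa [neg_sub] using
      (tendsto_rpow_neg_atTop (by linarith : 0 < 2 * β - m)).const_mul (c * 16 ^ β)
  filter_upwards [hlim.eventually_lt_const hC, eventually_gt_atTop 0] with a hlt ha
  rw [← div_eq_mul_inv, lt_div_iff₀ (by positivity), mul_assoc, rpow_neg_sq_div_sixteen_mul_pow ha,
    ← mul_assoc]
  exact hlt

lemma sub_log_le_log_three_add_inv_supNormOn_ball {d : ℕ} {r ε : ℝ} (hr : 0 < r) (hε : 0 < ε)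
    {k : Ed d} (hrk : r ≤ ‖k‖) (hk : 1 ≤ ‖k‖) (m : ℕ) :
    (‖k‖ - r) ^ 2 / 2 - log (ε * (2 * π) ^ (-(d / 2 : ℝ))) ≤
      log (3 + (supNormOn (ball d r) (FT (vkme k m ε)))⁻¹) := by
  refine sub_log_le_log_three_add_inv (supNormOn_ball_FT_vkme_pos m hr hε hrk) ?_
  calc _ ≤ ε * (‖k‖ ^ m)⁻¹ * (2 * π) ^ (-(d / 2 : ℝ)) * rexp (-(‖k‖ - r) ^ 2 / 2) :=
        supNormOn_ball_FT_vkme_le m hε.le hrk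
    _ = (‖k‖ ^ m)⁻¹ * (ε * (2 * π) ^ (-(d / 2 : ℝ)) * rexp (-((‖k‖ - r) ^ 2 / 2))) := by
        rw [neg_div]; ring
    _ ≤ ε * (2 * π) ^ (-(d / 2 : ℝ)) * rexp (-((‖k‖ - r) ^ 2 / 2)) :=
        mul_le_of_le_one_left (by positivity) (inv_le_one_of_one_le₀ (one_le_pow₀ hk))

theorem vkme_instability_L2_general {d : ℕ} (r ε : ℝ) (hr : 0 < r) (hε : 0 < ε)
    (m : ℕ) (β₂ c₂ : ℝ) (hβ : (m : ℝ) / 2 < β₂) (hc : 0 < c₂) :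
    ∃ K : ℝ, 0 < K ∧
      ∀ k : Ed d, K ≤ ‖k‖ →
        L2Norm (vkme k m ε) >
          c₂ * Real.log (3 + (supNormOn (ball d r) (FT (vkme k m ε)))⁻¹) ^ (-β₂) := by
  have hlarge : ∀ᶠ a in atTop, (max r 1 ≤ a ∧
      a ^ 2 / 16 ≤ (a - r) ^ 2 / 2 - log (ε * (2 * π) ^ (-(d / 2 : ℝ)))) ∧
      c₂ * (a ^ 2 / 16) ^ (-β₂) < ε * √(π ^ (d / 2 : ℝ) / 2) * (a ^ m)⁻¹ :=
    ((eventually_ge_atTop _).and (eventually_sq_div_sixteen_le r _)).and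
      (eventually_mul_rpow_neg_sq_div_sixteen_lt hβ c₂ (by positivity))
  obtain ⟨K, hK⟩ := eventually_atTop.1 hlarge
  refine ⟨max K 1, by positivity, fun k hk => ?_⟩
  obtain ⟨⟨hkr1, hquad⟩, hpow⟩ := hK ‖k‖ (le_of_max_le_left hk)
  have hrk : r ≤ ‖k‖ := le_of_max_le_left hkr1
  have hlog := sub_log_le_log_three_add_inv_supNormOn_ball hr hε hrk (le_of_max_le_right hkr1) m
  have hβ₂ : 0 ≤ β₂ := (div_nonneg m.cast_nonneg zero_le_two).trans hβ.le
  calc c₂ * log (3 + (supNormOn (ball d r) (FT (vkme k m ε)))⁻¹) ^ (-β₂)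
      ≤ c₂ * (‖k‖ ^ 2 / 16) ^ (-β₂) := by
        gcongr ?_ * ?_
        exact rpow_le_rpow_of_nonpos (by have := hr.trans_le hrk; positivity) (hquad.trans hlog)
          (neg_nonpos.2 hβ₂)
    _ < ε * √(π ^ (d / 2 : ℝ) / 2) * (‖k‖ ^ m)⁻¹ := hpow
    _ ≤ L2Norm (vkme k m ε) := mul_right_comm ε _ _ ▸ L2Norm_vkme_ge k m ε

/-- Instability estimate (4.8) in the L² norm. -/
theorem vkme_instability_L2 {d : ℕ} (hd : 1 ≤ d) (r ε : ℝ) (hr : 0 < r) (hε : 0 < ε)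
    (m : ℕ) (hm : 0 < m) (β₂ c₂ : ℝ) (hβ : (m : ℝ) / 2 < β₂) (hc : 0 < c₂) :
    ∃ K : ℝ, 0 < K ∧
      ∀ k : Ed d, K ≤ ‖k‖ →
        L2Norm (vkme k m ε) >
          c₂ * Real.log (3 + (supNormOn (ball d r) (FT (vkme k m ε)))⁻¹) ^ (-β₂) :=
  vkme_instability_L2_general r ε hr hε m β₂ c₂ hβ hc

end
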